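/- Let T be a subtree of ω^{<ω} all of whose nodes are extendible, and suppose there is a (relatively continuous) functional deciding equality of paths: a function that, given any pair of paths P, Q through T, outputs 1 if P = Q and 0 otherwise, and whose output on each pair depends only on finitely many values of P and Q. Then the set [T] of paths through T is countable. -/
import Mathlib


/-- If a tree presentation admits a continuous equality-decider on
pairs of paths, then the set of paths is countable. -/
theorem stmt0 (T : Set (List ℕ))
    (hT : ∀ s ∈ T, ∀ t : List ℕ, t <+: s → t ∈ T)
    (paths : Set (ℕ → ℕ))
    (hpaths : paths = {X : ℕ → ℕ | ∀ n : ℕ, (List.ofFn fun i : Fin n => X i) ∈ T})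
    (hext : ∀ s ∈ T, ∃ X ∈ paths, (List.ofFn fun i : Fin s.length => X i) = s)
    (F : (ℕ → ℕ) → (ℕ → ℕ) → ℕ)
    (hF : ∀ P ∈ paths, ∀ Q ∈ paths, (P = Q → F P Q = 1) ∧ (P ≠ Q → F P Q = 0))
    (hcont : ∀ P ∈ paths, ∀ Q ∈ paths, ∃ n : ℕ, ∀ P' ∈ paths, ∀ Q' ∈ paths,
      (∀ i < n, P' i = P i) → (∀ i < n, Q' i = Q i) → F P' Q' = F P Q) :
    paths.Countable := by
  classical
  choose! n hn using fun P (hP : P ∈ paths) => hcont P hP P hP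
  set f : (ℕ → ℕ) → List ℕ := fun P => List.ofFn fun i : Fin (n P) => P i with hf
  have inj : Set.InjOn f paths := by
    intro P hP Q hQ h
    have hlen : n P = n Q := by
      have := congrArg List.length h
      simpa [hf] using this
    have hagree : ∀ i < n P, Q i = P i := by
      intro i hi
      have h1 : (f P)[i]? = (f Q)[i]? := by rw [h]
      simp [hf, List.getElem?_ofFn, List.ofFnNthVal, hi, ← hlen] at h1
      exact h1.symm
    have hFPQ : F P Q = F P P :=
      hn P hP P hP Q hQ (fun i _ => rfl) hagree
    have hPP : F P P = 1 := (hF P hP P hP).1 rfl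
    by_contra hne
    have : F P Q = 0 := (hF P hP Q hQ).2 hne
    omega
  exact Set.countable_of_injective_of_countable_image inj
    (Set.to_countable _)
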